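/- For every punctured convex Euclidean n-gon P* (i.e., for every placement of the puncture in the interior of the convex n-gon), the natural simplicial embedding of the geometric flip-graph F(P*) into the topological flip-graph T_n is never surjective: there exists a triangulation of the once-punctured disk Δ*_n whose isotopy class is not realized by any triangulation of P*. -/

import Mathlib

open Set Metric Bornology

noncomputable section

/-- Points of the Euclidean plane. -/
abbrev Pt : Type := EuclideanSpace ℝ (Fin 2)

/-- The closed line segment with the given (unordered) pair of endpoints. -/
def sseg (e : Sym2 Pt) : Set Pt :=
  Sym2.lift ⟨fun x y => segment ℝ x y, fun x y => segment_symm ℝ x y⟩ e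

/-- The relative interior (open segment) of the line segment with the given
(unordered) pair of endpoints. -/
def oseg (e : Sym2 Pt) : Set Pt :=
  Sym2.lift ⟨fun x y => openSegment ℝ x y, fun x y => openSegment_symm ℝ x y⟩ e

/-- Two line segments are non-crossing when they share an endpoint or
have disjoint (relative) interiors. -/
def SegNoncross (e f : Sym2 Pt) : Prop :=
  (∃ x : Pt, x ∈ e ∧ x ∈ f) ∨ Disjoint (oseg e) (oseg f)

/-- A triangulation with edges chosen among the set `A` of allowed segments
(recorded as unordered pairs of endpoints): a maximal subset of `A` consisting of
pairwise non-crossing segments. -/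
def IsGeomTriangulation (A : Set (Sym2 Pt)) (T : Set (Sym2 Pt)) : Prop :=
  T ⊆ A ∧ (∀ e ∈ T, ∀ f ∈ T, SegNoncross e f) ∧
    ∀ e ∈ A, (∀ f ∈ T, SegNoncross e f) → e ∈ T

/-- Two sets (e.g. triangulations) differ by exactly one element (a flip). -/
def FlipAdj {α : Type*} (S T : Set α) : Prop :=
  ∃ e f, e ∈ S ∧ e ∉ T ∧ f ∈ T ∧ f ∉ S ∧ S \ {e} = T \ {f}

/-- The flip-graph on the collection of triangulations singled out by the
predicate `Tri`: two triangulations are adjacent when they differ by exactly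
one element. -/
def FlipGraph {α : Type*} (Tri : Set α → Prop) : SimpleGraph {S : Set α // Tri S} where
  Adj S T := FlipAdj S.1 T.1
  symm := by
    constructor
    rintro S T ⟨e, f, he, he', hf, hf', hst⟩
    exact ⟨f, e, hf, hf', he, he', hst.symm⟩
  loopless := by
    constructor
    rintro S ⟨e, f, he, he', hf, hf', hst⟩
    exact he' he

/-- A convex polygon with `n` vertices: `n` distinct points of the plane in strictly
convex position. -/
structure ConvexPolygon (n : ℕ) where
  vtx : Fin n → Pt
  three_le : 3 ≤ n
  inj : Function.Injective vtx
  convexPos : ∀ i : Fin n, vtx i ∉ convexHull ℝ (Set.range vtx \ {vtx i})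

/-- The vertex set of a convex polygon. -/
def ConvexPolygon.V {n : ℕ} (P : ConvexPolygon n) : Set Pt := Set.range P.vtx

/-- The region (convex body) bounded by a convex polygon. -/
def ConvexPolygon.body {n : ℕ} (P : ConvexPolygon n) : Set Pt := convexHull ℝ P.V

/-- The allowed segments for triangulations of a convex polygon `P`: segments joining
two distinct vertices of `P`, whose relative interior avoids the vertices. -/
def chordEdges {n : ℕ} (P : ConvexPolygon n) : Set (Sym2 Pt) :=
  {e | ∃ x y, e = s(x, y) ∧ x ∈ P.V ∧ y ∈ P.V ∧ x ≠ y ∧ Disjoint (oseg e) P.V}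

/-- The allowed segments for triangulations of the punctured polygon `P⋆` obtained by
marking a point `p` inside the convex polygon `P`: segments joining two distinct
marked points (vertices of `P` or the puncture `p`) whose relative interior avoids
all the marked points. -/
def punctEdges {n : ℕ} (P : ConvexPolygon n) (p : Pt) : Set (Sym2 Pt) :=
  {e | ∃ x y, e = s(x, y) ∧ x ∈ insert p P.V ∧ y ∈ insert p P.V ∧ x ≠ y ∧
    Disjoint (oseg e) (insert p P.V)}

/-- The flip-graph of a convex polygon `P` (the graph `𝒜ₙ` of the associahedron). -/
def polyGraph {n : ℕ} (P : ConvexPolygon n) :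
    SimpleGraph {S : Set (Sym2 Pt) // IsGeomTriangulation (chordEdges P) S} :=
  FlipGraph _

/-- The flip-graph `ℱ(P⋆)` of the punctured polygon `P⋆`. -/
def punctGraph {n : ℕ} (P : ConvexPolygon n) (p : Pt) :
    SimpleGraph {S : Set (Sym2 Pt) // IsGeomTriangulation (punctEdges P p) S} :=
  FlipGraph _

/-- An arc in the surface `K` (a topological disk) with set of marked points `M`:
a simple curve joining two marked points, whose interior avoids all marked points
and stays in `K`, and which, if it is a loop, is essential (it encloses a marked
point). -/
structure PreArc (K M : Set Pt) where
  f : ℝ → Pt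
  cont : ContinuousOn f (Icc 0 1)
  ends0 : f 0 ∈ M
  ends1 : f 1 ∈ M
  inj : InjOn f (Ioo 0 1)
  ne_ends : ∀ t ∈ Ioo (0:ℝ) 1, f t ≠ f 0 ∧ f t ≠ f 1
  mem : ∀ t ∈ Ioo (0:ℝ) 1, f t ∈ K \ M
  essential : f 0 = f 1 → ∃ q ∈ M, q ≠ f 0 ∧
    IsBounded (connectedComponentIn ((f '' Icc 0 1)ᶜ) q)

/-- `H` is an isotopy from the arc `a` to the arc `b`: a continuous family of arcs
fixing the endpoints. -/
def IsIsotopy {K M : Set Pt} (a b : PreArc K M) (H : ℝ → ℝ → Pt) : Prop :=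
  ContinuousOn (Function.uncurry H) (Icc 0 1 ×ˢ Icc 0 1) ∧
  (∀ t ∈ Icc (0:ℝ) 1, H 0 t = a.f t) ∧ (∀ t ∈ Icc (0:ℝ) 1, H 1 t = b.f t) ∧
  (∀ s ∈ Icc (0:ℝ) 1, H s 0 = a.f 0 ∧ H s 1 = a.f 1) ∧
  (∀ s ∈ Icc (0:ℝ) 1, ∃ c : PreArc K M, ∀ t ∈ Icc (0:ℝ) 1, c.f t = H s t)

/-- Two arcs are isotopic when there is an isotopy between them. -/
def Isotopic {K M : Set Pt} (a b : PreArc K M) : Prop := ∃ H, IsIsotopy a b H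

/-- An isotopy class of arcs in the disk `K` with marked points `M`. -/
def Arc (K M : Set Pt) := Quot (@Isotopic K M)

/-- The isotopy class of an arc. -/
def PreArc.cls {K M : Set Pt} (a : PreArc K M) : Arc K M := Quot.mk _ a

/-- The interior of an arc (the curve minus its endpoints). -/
def PreArc.intIm {K M : Set Pt} (a : PreArc K M) : Set Pt := a.f '' Ioo 0 1

/-- Two isotopy classes of arcs are non-crossing when they admit representatives
that share an endpoint or have disjoint interiors. -/
def ArcNoncross {K M : Set Pt} (γ δ : Arc K M) : Prop :=
  ∃ a b : PreArc K M, a.cls = γ ∧ b.cls = δ ∧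
    ((∃ x, (x = a.f 0 ∨ x = a.f 1) ∧ (x = b.f 0 ∨ x = b.f 1)) ∨
      Disjoint a.intIm b.intIm)

/-- A triangulation of the disk `K` with marked points `M`: a maximal set of pairwise
non-crossing isotopy classes of arcs. -/
def IsTopTriangulation (K M : Set Pt) (T : Set (Arc K M)) : Prop :=
  (∀ γ ∈ T, ∀ δ ∈ T, ArcNoncross γ δ) ∧ ∀ γ, (∀ δ ∈ T, ArcNoncross γ δ) → γ ∈ T

/-- The (topological) flip-graph of the disk `K` with marked points `M`: two
triangulations are adjacent when they differ by exactly one arc. -/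
def topGraph (K M : Set Pt) :
    SimpleGraph {T : Set (Arc K M) // IsTopTriangulation K M T} :=
  FlipGraph _

/-- The straight arc realizing the line segment from `x` to `y`. -/
def segPreArc (K M : Set Pt) (x y : Pt) (hx : x ∈ M) (hy : y ∈ M) (hxy : x ≠ y)
    (hsub : openSegment ℝ x y ⊆ K \ M) : PreArc K M where
  f := fun t => x + t • (y - x)
  cont := (continuous_const.add (continuous_id.smul continuous_const)).continuousOn
  ends0 := by simpa using hx
  ends1 := by simpa using hy
  inj := by
    intro s hs t ht h
    have h' : (s - t) • (y - x) = 0 := by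
      rw [sub_smul]
      have := add_left_cancel h
      rw [this]; abel
    rcases smul_eq_zero.mp h' with h'' | h''
    · linarith [sub_eq_zero.mp h'']
    · exact absurd (sub_eq_zero.mp h'') (fun hh => hxy hh.symm)
  ne_ends := by
    intro t ht
    constructor
    · intro h
      have h' : (t - 0) • (y - x) = 0 := by
        rw [sub_smul]
        simp only [zero_smul, sub_eq_zero]
        simpa using h
      rcases smul_eq_zero.mp h' with h'' | h''
      · rw [sub_zero] at h''; exact absurd h'' (ne_of_gt ht.1)
      · exact hxy (sub_eq_zero.mp h'').symm
    · intro h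
      have h' : (t - 1) • (y - x) = 0 := by
        rw [sub_smul, one_smul, sub_eq_zero]
        have : x + t • (y - x) = x + (y - x) := by simpa using h
        have := add_left_cancel this
        rw [this]
      rcases smul_eq_zero.mp h' with h'' | h''
      · have : t = 1 := by linarith [sub_eq_zero.mp h'']
        exact absurd this (ne_of_lt ht.2)
      · exact hxy (sub_eq_zero.mp h'').symm
  mem := by
    intro t ht
    apply hsub
    rw [openSegment_eq_image' ℝ x y]
    exact ⟨t, ht, rfl⟩
  essential := by
    intro h
    exfalso
    apply hxy
    have h2 : x + (0:ℝ) • (y - x) = x + (1:ℝ) • (y - x) := h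
    simp only [zero_smul, add_zero, one_smul] at h2
    rw [h2]
    abel

/-- The set of isotopy classes of arcs realized by the straight segments of a set `S`
of segments (recorded by their unordered pairs of endpoints): the simplicial image of
a geometric triangulation inside the topological flip-graph. -/
def topOf (K M : Set Pt) (S : Set (Sym2 Pt)) : Set (Arc K M) :=
  {γ | ∃ x y, ∃ (hx : x ∈ M) (hy : y ∈ M) (hxy : x ≠ y)
      (hsub : openSegment ℝ x y ⊆ K \ M),
    s(x, y) ∈ S ∧ γ = (segPreArc K M x y hx hy hxy hsub).cls}

/-- A topological triangulation of the punctured polygon `P⋆` (the disk `P.body` with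
marked points the vertices of `P` and the puncture `p`) lies in the image of the
natural simplicial embedding of the geometric flip-graph `ℱ(P⋆)` when it is the
set of isotopy classes of the segments of a geometric triangulation of `P⋆`. -/
def InGeomImage {n : ℕ} (P : ConvexPolygon n) (p : Pt)
    (A : Set (Arc P.body (insert p P.V))) : Prop :=
  ∃ S : Set (Sym2 Pt), IsGeomTriangulation (punctEdges P p) S ∧
    A = topOf P.body (insert p P.V) S

/-!
A loop based at a vertex `v` of `P` and running once around the puncture is an arc of `Δ⋆ₙ`.
Its endpoints, an isotopy invariant, coincide, whereas a straight segment has distinct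
endpoints; so a topological triangulation containing this loop (Zorn's lemma provides one) is
not the image of any geometric triangulation.

The loop is the boundary of a thin triangle with apex `v` whose other two corners lie close to
`p`, just beyond it as seen from `v`. The triangle lies in `P`, and it meets the vertices of `P`
only at `v` because vertices are extreme points of `P`. Barycentric coordinates make its boundary
an injective loop whose complement has a bounded component containing `p`.
-/

open Filter Topology

theorem connectedComponentIn_compl_frontier_subset_interior {X : Type*} [TopologicalSpace X]
    {s : Set X} {x : X} (hx : x ∈ interior s) :
    connectedComponentIn (frontier s)ᶜ x ⊆ interior s := by
  have hcover : (frontier s)ᶜ ⊆ interior s ∪ (closure s)ᶜ := fun y hy => by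
    by_cases hys : y ∈ closure s
    · exact Or.inl (not_not.mp fun h => hy ⟨hys, h⟩)
    · exact Or.inr hys
  exact isPreconnected_connectedComponentIn.subset_left_of_subset_union isOpen_interior
    isClosed_closure.isOpen_compl (disjoint_compl_right.mono_left interior_subset_closure)
    ((connectedComponentIn_subset _ _).trans hcover)
    ⟨x, mem_connectedComponentIn (disjoint_interior_frontier.notMem_of_mem_left hx), hx⟩

section Affine

variable {E : Type*} [NormedAddCommGroup E] [NormedSpace ℝ E]

theorem mem_extremePoints_convexHull_of_notMem_convexHull_sdiff {s : Set E} (hs : s.Finite)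
    {x : E} (hx : x ∈ s) (hxs : x ∉ convexHull ℝ (s \ {x})) :
    x ∈ (convexHull ℝ s).extremePoints ℝ := by
  by_contra hext
  have hsub : (convexHull ℝ s).extremePoints ℝ ⊆ s \ {x} := fun y hy =>
    ⟨extremePoints_convexHull_subset hy, fun hyx => hext (hyx ▸ hy)⟩
  have hKM : convexHull ℝ ((convexHull ℝ s).extremePoints ℝ) = convexHull ℝ s := by
    rw [← ((hs.subset fun y hy => (hsub hy).1).isClosed_convexHull (𝕜 := ℝ)).closure_eq]
    exact closure_convexHull_extremePoints (hs.isCompact_convexHull (𝕜 := ℝ))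
      (convex_convexHull ℝ s)
  exact hxs (convexHull_mono hsub (hKM.symm ▸ subset_convexHull ℝ s hx))

theorem AffineBasis.frontier_convexHull {ι : Type*} [Finite ι] (b : AffineBasis ι ℝ E) :
    frontier (convexHull ℝ (range b)) = {x | (∀ i, 0 ≤ b.coord i x) ∧ ∃ i, b.coord i x = 0} := by
  ext x
  rw [frontier, ((finite_range b).isClosed_convexHull (𝕜 := ℝ)).closure_eq, b.interior_convexHull,
    b.convexHull_eq_nonneg_coord]
  simp only [Set.mem_sdiff, mem_ofPred_eq, not_forall, not_lt]
  exact and_congr_right fun h => exists_congr fun i => ⟨fun h' => le_antisymm h' (h i), le_of_eq⟩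

def triangleLoop (q : Fin 3 → E) (t : ℝ) : E :=
  if t ≤ 1 / 3 then AffineMap.lineMap (q 0) (q 1) (3 * t)
  else if t ≤ 2 / 3 then AffineMap.lineMap (q 1) (q 2) (3 * t - 1)
  else AffineMap.lineMap (q 2) (q 0) (3 * t - 2)

theorem continuous_triangleLoop (q : Fin 3 → E) : Continuous (triangleLoop q) := by
  refine Continuous.if_le (by fun_prop) (Continuous.if_le (by fun_prop) (by fun_prop)
    continuous_id continuous_const ?_) continuous_id continuous_const ?_ <;>
  rintro t rfl <;> norm_num

theorem triangleLoop_zero (q : Fin 3 → E) : triangleLoop q 0 = q 0 := by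
  norm_num [triangleLoop]

theorem triangleLoop_one (q : Fin 3 → E) : triangleLoop q 1 = q 0 := by
  norm_num [triangleLoop]

def loopWeight (t : ℝ) : Fin 3 → ℝ :=
  if t ≤ 1 / 3 then ![1 - 3 * t, 3 * t, 0]
  else if t ≤ 2 / 3 then ![0, 2 - 3 * t, 3 * t - 1]
  else ![3 * t - 2, 0, 3 - 3 * t]

theorem AffineBasis.coord_triangleLoop (b : AffineBasis (Fin 3) ℝ E) (t : ℝ) (i : Fin 3) :
    b.coord i (triangleLoop b t) = loopWeight t i := by
  unfold triangleLoop loopWeight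
  split_ifs <;> rw [AffineMap.apply_lineMap, AffineMap.lineMap_apply_ring'] <;>
  fin_cases i <;>
  simp only [Fin.zero_eta, Fin.mk_one, Fin.reduceFinMk, Fin.isValue, AffineBasis.coord_apply,
    Matrix.cons_val_zero, Matrix.cons_val_one, Matrix.cons_val, Fin.reduceEq, if_true,
    if_false] <;>
  ring

theorem loopWeight_nonneg {t : ℝ} (ht : t ∈ Icc 0 1) (i : Fin 3) : 0 ≤ loopWeight t i := by
  obtain ⟨h0, h1⟩ := ht
  unfold loopWeight
  split_ifs <;> fin_cases i <;>
  simp only [Fin.zero_eta, Fin.mk_one, Fin.reduceFinMk, Fin.isValue, Matrix.cons_val_zero,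
    Matrix.cons_val_one, Matrix.cons_val] <;>
  linarith

theorem exists_loopWeight_eq_zero (t : ℝ) : ∃ i, loopWeight t i = 0 := by
  unfold loopWeight
  split_ifs
  exacts [⟨2, rfl⟩, ⟨0, rfl⟩, ⟨1, rfl⟩]

theorem injOn_loopWeight : InjOn loopWeight (Ico 0 1) := by
  rintro s ⟨hs0, hs1⟩ t ⟨ht0, ht1⟩ h
  have h0 := congrFun h 0
  have h1 := congrFun h 1
  have h2 := congrFun h 2
  unfold loopWeight at h0 h1 h2
  split_ifs at h0 h1 h2 <;>
  simp only [Matrix.cons_val_zero, Matrix.cons_val_one, Matrix.cons_val] at h0 h1 h2 <;>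
  linarith

theorem exists_loopWeight_eq {w : Fin 3 → ℝ} (hw : ∀ i, 0 ≤ w i) (hsum : ∑ i, w i = 1)
    (hzero : ∃ i, w i = 0) : ∃ t ∈ Icc (0 : ℝ) 1, loopWeight t = w := by
  rw [Fin.sum_univ_three] at hsum
  have := hw 0; have := hw 1; have := hw 2
  obtain ⟨i, hi⟩ := hzero
  fin_cases i <;> simp only [Fin.zero_eta, Fin.mk_one, Fin.reduceFinMk, Fin.isValue] at hi
  on_goal 1 => refine ⟨(1 + w 2) / 3, ⟨by linarith, by linarith⟩, ?_⟩
  on_goal 2 => refine ⟨(2 + w 0) / 3, ⟨by linarith, by linarith⟩, ?_⟩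
  on_goal 3 => refine ⟨w 1 / 3, ⟨by linarith, by linarith⟩, ?_⟩
  all_goals
    funext k
    unfold loopWeight
    split_ifs <;> fin_cases k <;>
    simp only [Fin.zero_eta, Fin.mk_one, Fin.reduceFinMk, Fin.isValue, Matrix.cons_val_zero,
      Matrix.cons_val_one, Matrix.cons_val] <;>
    linarith

theorem AffineBasis.injOn_triangleLoop (b : AffineBasis (Fin 3) ℝ E) :
    InjOn (triangleLoop b) (Ico 0 1) := fun s hs t ht h =>
  injOn_loopWeight hs ht (funext fun i => by rw [← b.coord_triangleLoop, h, b.coord_triangleLoop])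

theorem AffineBasis.image_triangleLoop (b : AffineBasis (Fin 3) ℝ E) :
    triangleLoop b '' Icc 0 1 = frontier (convexHull ℝ (range b)) := by
  ext x
  rw [b.frontier_convexHull]
  constructor
  · rintro ⟨t, ht, rfl⟩
    simp only [mem_ofPred_eq, b.coord_triangleLoop]
    exact ⟨loopWeight_nonneg ht, exists_loopWeight_eq_zero t⟩
  · rintro ⟨hnonneg, hzero⟩
    obtain ⟨t, ht, hw⟩ := exists_loopWeight_eq hnonneg (b.sum_coord_apply_eq_one x) hzero
    exact ⟨t, ht, b.ext_elem fun i => by rw [b.coord_triangleLoop, hw]⟩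

def triangleAround (v p e : E) (δ : ℝ) : Fin 3 → E :=
  ![v, p + δ • (p - v + e), p + δ • (p - v - e)]

theorem affineIndependent_triangleAround {v p e : E} (hpe : LinearIndependent ℝ ![p - v, e])
    {δ : ℝ} (hδ : 0 < δ) : AffineIndependent ℝ (triangleAround v p e δ) := by
  rw [affineIndependent_iff_of_fintype]
  intro w hsum hcomb
  rw [Finset.weightedVSub_eq_linear_combination _ hsum, Fin.sum_univ_three] at hcomb
  rw [Fin.sum_univ_three] at hsum
  have hexp : ((w 1 + w 2) * (1 + δ)) • (p - v) + ((w 1 - w 2) * δ) • e = 0 := by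
    rw [← hcomb]
    simp only [triangleAround, Matrix.cons_val_zero, Matrix.cons_val_one, Matrix.cons_val]
    linear_combination (norm := module) (-hsum) • v
  obtain ⟨h₁, h₂⟩ := LinearIndependent.pair_iff.mp hpe _ _ hexp
  have h₁' : w 1 + w 2 = 0 := (mul_eq_zero.mp h₁).resolve_right (by positivity)
  have h₂' : w 1 - w 2 = 0 := (mul_eq_zero.mp h₂).resolve_right hδ.ne'
  intro i
  fin_cases i <;> simp only [Fin.zero_eta, Fin.mk_one, Fin.reduceFinMk, Fin.isValue] <;> linarith

theorem mem_interior_convexHull_triangleAround {v p e : E} {δ : ℝ} (hδ : 0 < δ)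
    {b : AffineBasis (Fin 3) ℝ E} (hb : ⇑b = triangleAround v p e δ) :
    p ∈ interior (convexHull ℝ (range b)) := by
  -- `p` divides the segment from `v` to `p + δ • (p - v)`, the midpoint of `b 1` and `b 2`,
  -- in the ratio `1 : δ`
  set w : Fin 3 → ℝ := ![δ / (1 + δ), 1 / (2 * (1 + δ)), 1 / (2 * (1 + δ))]
  have hsum : ∑ i, w i = 1 := by
    simp only [w, Fin.sum_univ_three, Matrix.cons_val_zero, Matrix.cons_val_one, Matrix.cons_val]
    field_simp
    ring
  have hp : Finset.univ.affineCombination ℝ b w = p := by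
    rw [hb, Finset.affineCombination_eq_linear_combination _ _ _ hsum, Fin.sum_univ_three]
    simp only [triangleAround, w, Matrix.cons_val_zero, Matrix.cons_val_one, Matrix.cons_val]
    match_scalars <;> field_simp <;> ring
  rw [b.interior_convexHull]
  intro i
  rw [← hp, b.coord_apply_combination_of_mem (Finset.mem_univ i) hsum]
  fin_cases i <;> simp only [w, Fin.zero_eta, Fin.mk_one, Fin.reduceFinMk, Fin.isValue,
    Matrix.cons_val_zero, Matrix.cons_val_one, Matrix.cons_val] <;> positivity

theorem exists_affineBasis_fin_three_mem_interior_convexHull [FiniteDimensional ℝ E]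
    (hE : Module.finrank ℝ E = 2) {v p : E} (hvp : v ≠ p) {U : Set E} (hU : U ∈ 𝓝 p) :
    ∃ b : AffineBasis (Fin 3) ℝ E, b 0 = v ∧ b 1 ∈ U ∧ b 2 ∈ U ∧
      p ∈ interior (convexHull ℝ (range b)) := by
  obtain ⟨e, hpe⟩ := exists_linearIndependent_pair_of_one_lt_rank (R := ℝ)
    (by rw [← Module.finrank_eq_rank, hE]; norm_num) (sub_ne_zero.mpr hvp.symm)
  have hnear : ∀ u : E, Tendsto (fun δ : ℝ => p + δ • u) (𝓝[>] 0) (𝓝 p) := fun u => by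
    simpa using ((by fun_prop : Continuous fun δ : ℝ => p + δ • u).tendsto 0).mono_left
      nhdsWithin_le_nhds
  obtain ⟨δ, ⟨hb₁, hb₂⟩, hδ⟩ := (((hnear _).eventually hU).and
    ((hnear _).eventually hU)).and self_mem_nhdsWithin |>.exists
  have hind := affineIndependent_triangleAround hpe hδ
  let b : AffineBasis (Fin 3) ℝ E :=
    ⟨_, hind, hind.affineSpan_eq_top_iff_card_eq_finrank_add_one.mpr (by simp [hE])⟩
  exact ⟨b, rfl, hb₁, hb₂, mem_interior_convexHull_triangleAround hδ rfl⟩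

end Affine

section Arc

variable {K M : Set Pt}

theorem Isotopic.endpoints_eq {a b : PreArc K M} (h : Isotopic a b) :
    (a.f 0, a.f 1) = (b.f 0, b.f 1) := by
  obtain ⟨H, -, -, hH₁, hends, -⟩ := h
  have h1 : (1 : ℝ) ∈ Icc 0 1 := right_mem_Icc.mpr zero_le_one
  have h0 : (0 : ℝ) ∈ Icc 0 1 := left_mem_Icc.mpr zero_le_one
  rw [← (hends 1 h1).1, ← (hends 1 h1).2, hH₁ 0 h0, hH₁ 1 h1]

def Arc.endpoints : Arc K M → Pt × Pt :=
  Quot.lift (fun a => (a.f 0, a.f 1)) fun _ _ h => h.endpoints_eq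

theorem PreArc.cls_notMem_topOf {a : PreArc K M} (ha : a.f 0 = a.f 1) (S : Set (Sym2 Pt)) :
    a.cls ∉ topOf K M S := by
  rintro ⟨x, y, hx, hy, hxy, hsub, -, hcls⟩
  have hends : (a.f 0, a.f 1) = (x + (0 : ℝ) • (y - x), x + (1 : ℝ) • (y - x)) :=
    congrArg Arc.endpoints hcls
  rw [zero_smul, add_zero, one_smul, add_sub_cancel, Prod.mk.injEq, ha] at hends
  exact hxy (hends.1.symm.trans hends.2)

theorem ArcNoncross.refl (γ : Arc K M) : ArcNoncross γ γ := by
  induction γ using Quot.ind with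
  | _ a => exact ⟨a, a, rfl, rfl, Or.inl ⟨a.f 0, Or.inl rfl, Or.inl rfl⟩⟩

theorem ArcNoncross.symm {γ δ : Arc K M} (h : ArcNoncross γ δ) : ArcNoncross δ γ := by
  obtain ⟨a, b, ha, hb, ⟨x, hxa, hxb⟩ | hdisj⟩ := h
  · exact ⟨b, a, hb, ha, Or.inl ⟨x, hxb, hxa⟩⟩
  · exact ⟨b, a, hb, ha, Or.inr hdisj.symm⟩

theorem exists_isTopTriangulation_superset {T₀ : Set (Arc K M)}
    (h₀ : ∀ γ ∈ T₀, ∀ δ ∈ T₀, ArcNoncross γ δ) :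
    ∃ T, T₀ ⊆ T ∧ IsTopTriangulation K M T := by
  set S := {T : Set (Arc K M) | ∀ γ ∈ T, ∀ δ ∈ T, ArcNoncross γ δ}
  have hchain : ∀ c ⊆ S, IsChain (· ⊆ ·) c → c.Nonempty → ∃ ub ∈ S, ∀ s ∈ c, s ⊆ ub :=
    fun c hc hchain _ => ⟨⋃₀ c, fun γ ⟨s₁, hs₁, hγ⟩ δ ⟨s₂, hs₂, hδ⟩ => by
      rcases hchain.total hs₁ hs₂ with h | h
      · exact hc hs₂ γ (h hγ) δ hδ
      · exact hc hs₁ γ hγ δ (h hδ), fun s hs => subset_sUnion_of_mem hs⟩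
  obtain ⟨T, hT₀, hmax⟩ := zorn_subset_nonempty S hchain T₀ h₀
  refine ⟨T, hT₀, hmax.prop, fun γ hγ => ?_⟩
  have hins : insert γ T ∈ S := by
    rintro α (rfl | hα) β (rfl | hβ)
    · exact ArcNoncross.refl _
    · exact hγ _ hβ
    · exact (hγ _ hα).symm
    · exact hmax.prop _ hα _ hβ
  exact hmax.2 hins (subset_insert _ _) (mem_insert _ _)

end Arc

section Polygon

variable {n : ℕ} (P : ConvexPolygon n)

theorem ConvexPolygon.vtx_mem_extremePoints (i : Fin n) : P.vtx i ∈ P.body.extremePoints ℝ :=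
  mem_extremePoints_convexHull_of_notMem_convexHull_sdiff (finite_range _) ⟨i, rfl⟩
    (P.convexPos i)

theorem ConvexPolygon.notMem_V_of_mem_interior {q : Pt} (hq : q ∈ interior P.body) :
    q ∉ P.V := by
  rintro ⟨i, rfl⟩
  exact (disjoint_interior_extremePoints _).notMem_of_mem_left hq (P.vtx_mem_extremePoints i)

theorem ConvexPolygon.eq_of_mem_V_of_mem_convexHull {b : AffineBasis (Fin 3) ℝ Pt}
    (hb : convexHull ℝ (range b) ⊆ P.body) (hb₁ : b 1 ∈ interior P.body)
    (hb₂ : b 2 ∈ interior P.body) {u : Pt} (hu : u ∈ P.V) (huT : u ∈ convexHull ℝ (range b)) :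
    u = b 0 := by
  obtain ⟨i, rfl⟩ := hu
  obtain ⟨j, hj⟩ := extremePoints_convexHull_subset
    (inter_extremePoints_subset_extremePoints_of_subset hb ⟨huT, P.vtx_mem_extremePoints i⟩)
  fin_cases j
  · exact hj.symm
  · exact absurd ⟨i, hj.symm⟩ (P.notMem_V_of_mem_interior hb₁)
  · exact absurd ⟨i, hj.symm⟩ (P.notMem_V_of_mem_interior hb₂)

theorem ConvexPolygon.triangleLoop_mem_body_sdiff {b : AffineBasis (Fin 3) ℝ Pt}
    (hb₀ : b 0 ∈ P.V) (hb₁ : b 1 ∈ interior P.body) (hb₂ : b 2 ∈ interior P.body) {p : Pt}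
    (hpT : p ∈ interior (convexHull ℝ (range b))) {t : ℝ} (ht : t ∈ Ioo 0 1) :
    triangleLoop b t ∈ P.body \ insert p P.V := by
  set T := convexHull ℝ (range b)
  have hTbody : T ⊆ P.body := by
    refine convexHull_min (range_subset_iff.2 fun i => ?_) (convex_convexHull ℝ _)
    fin_cases i
    exacts [subset_convexHull ℝ _ hb₀, interior_subset hb₁, interior_subset hb₂]
  have hfront : triangleLoop b t ∈ frontier T :=
    b.image_triangleLoop ▸ mem_image_of_mem _ (Ioo_subset_Icc_self ht)
  have hT : triangleLoop b t ∈ T :=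
    ((finite_range b).isClosed_convexHull (𝕜 := ℝ)).frontier_subset hfront
  refine ⟨hTbody hT, ?_⟩
  rintro (hpt | hV)
  · exact disjoint_interior_frontier.notMem_of_mem_left hpT (hpt ▸ hfront)
  · have h0 := P.eq_of_mem_V_of_mem_convexHull hTbody hb₁ hb₂ hV hT
    rw [← triangleLoop_zero (b : Fin 3 → Pt)] at h0
    exact ht.1.ne' (b.injOn_triangleLoop (Ioo_subset_Ico_self ht) (left_mem_Ico.mpr zero_lt_one) h0)

theorem ConvexPolygon.exists_loop_preArc {p : Pt} (hp : p ∈ interior P.body) :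
    ∃ a : PreArc P.body (insert p P.V), a.f 0 = a.f 1 := by
  set v := P.vtx ⟨0, by have := P.three_le; omega⟩
  have hv : v ∈ P.V := ⟨_, rfl⟩
  have hvp : v ≠ p := fun h => P.notMem_V_of_mem_interior hp (by rwa [← h])
  obtain ⟨b, hb₀, hb₁, hb₂, hpT⟩ := exists_affineBasis_fin_three_mem_interior_convexHull
    finrank_euclideanSpace_fin hvp (isOpen_interior.mem_nhds hp)
  have hloop : triangleLoop b 0 = triangleLoop b 1 :=
    (triangleLoop_zero _).trans (triangleLoop_one _).symm
  have hne : ∀ t ∈ Ioo (0 : ℝ) 1, triangleLoop b t ≠ triangleLoop b 0 := fun t ht h =>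
    ht.1.ne' (b.injOn_triangleLoop (Ioo_subset_Ico_self ht) (left_mem_Ico.mpr zero_lt_one) h)
  have hends : triangleLoop b 0 ∈ insert p P.V := by
    rw [triangleLoop_zero, hb₀]
    exact mem_insert_of_mem _ hv
  refine ⟨{ f := triangleLoop b
            cont := (continuous_triangleLoop _).continuousOn
            ends0 := hends
            ends1 := hloop ▸ hends
            inj := b.injOn_triangleLoop.mono Ioo_subset_Ico_self
            ne_ends := fun t ht => ⟨hne t ht, hloop ▸ hne t ht⟩
            mem := fun t ht => P.triangleLoop_mem_body_sdiff (hb₀ ▸ hv) hb₁ hb₂ hpT ht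
            essential := fun _ => ⟨p, mem_insert _ _, ?_, ?_⟩ }, hloop⟩
  · rw [triangleLoop_zero, hb₀]
    exact hvp.symm
  · rw [b.image_triangleLoop]
    exact (isBounded_convexHull.mpr (finite_range b).isBounded).subset
      ((connectedComponentIn_compl_frontier_subset_interior hpT).trans interior_subset)

end Polygon

/-- For every punctured convex Euclidean `n`-gon `P⋆` (i.e., for
every placement of the puncture `p` in the interior of the convex `n`-gon `P`), the
natural simplicial embedding of the geometric flip-graph `ℱ(P⋆)` into the topological
flip-graph `𝒯ₙ` (modeled on the disk `P.body` with marked points the vertices of `P`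
and `p`) is never surjective: there is a triangulation of the once-punctured disk
`Δ⋆ₙ` whose isotopy class is not realized by any triangulation of `P⋆`. -/
theorem geometric_embedding_never_onto (n : ℕ) (P : ConvexPolygon n)
    (p : Pt) (hp : p ∈ interior P.body) :
    ∃ A : {T : Set (Arc P.body (insert p P.V)) //
        IsTopTriangulation P.body (insert p P.V) T},
      ¬ InGeomImage P p A.1 := by
  obtain ⟨a, ha⟩ := P.exists_loop_preArc hp
  obtain ⟨T, haT, hT⟩ := exists_isTopTriangulation_superset (T₀ := {a.cls}) (by
    rintro γ rfl δ rfl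
    exact ArcNoncross.refl _)
  refine ⟨⟨T, hT⟩, ?_⟩
  rintro ⟨S, -, hTS⟩
  exact a.cls_notMem_topOf ha S (hTS ▸ haT rfl)

end
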